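/- For every 1 ≤ a with 2a ≤ m and any choices F_{2a-1} ∈ {L_{2a-1}^+, L_{2a-1}^-, M_{2a-1}^+, M_{2a-1}^-} and F_{2a} ∈ {L_{2a}^+, L_{2a}^-, M_{2a}^+, M_{2a}^-}, one has F_{2a-1}·F_{2a}·e_{2a-1}^⊥·e_{2a}^⊥ = (-1)^{|F_{2a-1}|+|F_{2a}|+1}·i·F_{2a-1}·F_{2a}. -/

import Mathlib

noncomputable section

/-- The bilinear map `B((a,b),(c,d)) = ∑ⱼ aⱼ dⱼ` on `ℂ^m × ℂ^m`. -/
def splitBilin (m : ℕ) :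
    ((Fin m → ℂ) × (Fin m → ℂ)) →ₗ[ℂ] ((Fin m → ℂ) × (Fin m → ℂ)) →ₗ[ℂ] ℂ :=
  LinearMap.mk₂ ℂ (fun v w => ∑ j, v.1 j * w.2 j)
    (fun v v' w => by simp [add_mul, Finset.sum_add_distrib])
    (fun c v w => by
      simp only [LinearMap.smul_apply, Prod.smul_fst, Pi.smul_apply, smul_eq_mul,
        Finset.mul_sum]
      exact Finset.sum_congr rfl fun i _ => by ring)
    (fun v w w' => by simp [mul_add, Finset.sum_add_distrib])
    (fun c v w => by
      simp only [Prod.smul_snd, Pi.smul_apply, smul_eq_mul, Finset.mul_sum]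
      exact Finset.sum_congr rfl fun i _ => by ring)

/-- The quadratic form `Q(a, b) = ∑ⱼ aⱼ bⱼ` on `ℂ^m × ℂ^m` (the span of the
`f_j^+` and the `f_j^-`). -/
def splitQ (m : ℕ) : QuadraticForm ℂ ((Fin m → ℂ) × (Fin m → ℂ)) :=
  LinearMap.BilinMap.toQuadraticMap (splitBilin m)

/-- The forward basis element `e_j^+` (1-based index `j`). -/
def eP (m : ℕ) (j : ℕ) : CliffordAlgebra (splitQ m) :=
  CliffordAlgebra.ι (splitQ m) ((fun i => if (i : ℕ) + 1 = j then 1 else 0), 0)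

/-- The backward basis element `e_j^-` (1-based index `j`). -/
def eM (m : ℕ) (j : ℕ) : CliffordAlgebra (splitQ m) :=
  CliffordAlgebra.ι (splitQ m) (0, (fun i => if (i : ℕ) + 1 = j then 1 else 0))

/-- `e_j = e_j^+ + e_j^-`. -/
def ee (m : ℕ) (j : ℕ) : CliffordAlgebra (splitQ m) := eP m j + eM m j

/-- `e_j^⊥ = e_j^+ - e_j^-`. -/
def eperp (m : ℕ) (j : ℕ) : CliffordAlgebra (splitQ m) := eP m j - eM m j

/-- The constant `i` for odd (1-based) indices and `1` for even indices. -/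
def oddI (s : ℕ) : ℂ := if s % 2 = 1 then Complex.I else 1

/-- `L_s^+`, i.e. `e_s^+ e_s^- + i e_s^+` for odd `s` and `e_s^+ e_s^- + e_s^+` for even `s`. -/
def idemLp (m : ℕ) (s : ℕ) : CliffordAlgebra (splitQ m) := eP m s * eM m s + oddI s • eP m s

/-- `L_s^-`. -/
def idemLm (m : ℕ) (s : ℕ) : CliffordAlgebra (splitQ m) := eP m s * eM m s - oddI s • eP m s

/-- `M_s^+`, i.e. `e_s^- e_s^+ + i e_s^-` for odd `s` and `e_s^- e_s^+ + e_s^-` for even `s`. -/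
def idemMp (m : ℕ) (s : ℕ) : CliffordAlgebra (splitQ m) := eM m s * eP m s + oddI s • eM m s

/-- `M_s^-`. -/
def idemMm (m : ℕ) (s : ℕ) : CliffordAlgebra (splitQ m) := eM m s * eP m s - oddI s • eM m s

/-- A generic choice `F_s ∈ {L_s^+, L_s^-, M_s^+, M_s^-}`, encoded by
`‖F_s‖ : Bool` (`true` for the `M`'s) and `|F_s| : Bool`
(`true` for `L_s^-` and `M_s^+`). -/
def idemF (m : ℕ) (s : ℕ) : Bool → Bool → CliffordAlgebra (splitQ m)
  | false, false => idemLp m s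
  | false, true => idemLm m s
  | true, false => idemMm m s
  | true, true => idemMp m s

/-- Numerical value of `|F_s|` or `‖F_s‖`. -/
def bval (b : Bool) : ℕ := if b then 1 else 0

/-- The four-vector `V_{a,b} = -e_a^⊥ e_a e_b^⊥ e_b`. -/
def VV (m : ℕ) (a b : ℕ) : CliffordAlgebra (splitQ m) :=
  -(eperp m a * ee m a * eperp m b * ee m b)

/-- The ordered product `F = F_1 F_2 ⋯ F_m`, the factor `F_s` being encoded by
`(nrm s, sg s) = (‖F_s‖, |F_s|)`. -/
def prodF (m : ℕ) (nrm sg : ℕ → Bool) : CliffordAlgebra (splitQ m) :=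
  ((List.range m).map fun s => idemF m (s + 1) (nrm (s + 1)) (sg (s + 1))).prod


/-!
For fixed `s`, put `p = e_s^+` and `q = e_s^-`. Then `p² = q² = 0` and `pq + qp = 1` force
`(pq + c p)(p - q) = -c (pq - c⁻¹ p)` for every `c ≠ 0` (and symmetrically for `qp + c q`),
so right multiplication by `e_s^⊥` sends `F_s` to `-c` times the element of the same kind
with coefficient `-c⁻¹`: `F_s` itself when `c = ±i` (`s` odd), the other sign when `c = ±1`
(`s` even). For `t ≠ s`, `e_t^⊥` anticommutes with `e_s^±`, hence commutes with `e_s^+ e_s^-`,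
so moving `e_{2a-1}^⊥` to the left past `F_{2a}` flips the sign of `F_{2a}`, and `e_{2a}^⊥`
flips it back.
-/

section IsotropicPair

variable {K A : Type*} [Field K] [Ring A] [Algebra K A] {p q : A}

theorem mul_add_smul_mul_sub (hp : p * p = 0) (hq : q * q = 0) (hpq : p * q + q * p = 1)
    {c : K} (hc : c ≠ 0) : (p * q + c • p) * (p - q) = (-c) • (p * q + (-c⁻¹) • p) := by
  have hpqp : p * q * p = p := by
    rw [mul_assoc, eq_sub_of_add_eq' hpq, mul_sub, mul_one, ← mul_assoc, hp, zero_mul, sub_zero]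
  rw [add_mul, mul_sub, mul_sub, hpqp, mul_assoc, hq, mul_zero, smul_mul_assoc, smul_mul_assoc,
    hp, smul_zero, smul_add, smul_smul, neg_mul_neg, mul_inv_cancel₀ hc]
  module

theorem mul_add_smul_mul_sub_swap (hp : p * p = 0) (hq : q * q = 0) (hpq : p * q + q * p = 1)
    {c : K} (hc : c ≠ 0) : (q * p + c • q) * (p - q) = c • (q * p + (-c⁻¹) • q) := by
  rw [← neg_sub, mul_neg, mul_add_smul_mul_sub hq hp (by rwa [add_comm]) hc, neg_smul, neg_neg]

end IsotropicPair

section Anticommute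

variable {K A : Type*} [CommRing K] [Ring A] [Algebra K A] {w x y : A}

theorem commute_mul_of_anticommute {a b : A} (ha : a * x = -(x * a)) (hb : b * x = -(x * b)) :
    Commute (a * b) x := by
  rw [Commute, SemiconjBy, mul_assoc, hb, mul_neg, ← mul_assoc, ha, neg_mul, neg_neg,
    mul_assoc]

theorem add_smul_mul_of_anticommute (hw : Commute w x) (hy : y * x = -(x * y)) (c : K) :
    (w + c • y) * x = x * (w - c • y) := by
  rw [add_mul, smul_mul_assoc, hy, hw.eq, mul_sub, mul_smul_comm, smul_neg, sub_eq_add_neg]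

end Anticommute

section Relations

variable {m : ℕ}

theorem splitQ_apply (v : (Fin m → ℂ) × (Fin m → ℂ)) :
    splitQ m v = ∑ j, v.1 j * v.2 j := rfl

theorem ι_mul_ι_add_swap_splitQ (v w : (Fin m → ℂ) × (Fin m → ℂ)) :
    CliffordAlgebra.ι (splitQ m) v * CliffordAlgebra.ι (splitQ m) w +
        CliffordAlgebra.ι (splitQ m) w * CliffordAlgebra.ι (splitQ m) v =
      algebraMap ℂ _ (∑ j, v.1 j * w.2 j + ∑ j, w.1 j * v.2 j) :=
  (CliffordAlgebra.ι_mul_ι_add_swap _ _).trans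
    (congrArg _ (LinearMap.BilinMap.polar_toQuadraticMap _ _))

theorem sum_indicator_mul_indicator (j k : ℕ) :
    ∑ i : Fin m,
        (if (i : ℕ) + 1 = j then (1 : ℂ) else 0) * (if (i : ℕ) + 1 = k then 1 else 0) =
      if j = k ∧ 1 ≤ j ∧ j ≤ m then 1 else 0 := by
  split_ifs with h
  · obtain ⟨rfl, h1, hm⟩ := h
    rw [Fintype.sum_eq_single ⟨j - 1, by omega⟩ fun i hi => ?_]
    · simp only [Nat.sub_add_cancel h1, if_true, mul_one]
    · have : (i : ℕ) + 1 ≠ j := fun h => hi (Fin.ext (by simp only; omega))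
      simp [this]
  · refine Finset.sum_eq_zero fun i _ => ?_
    split_ifs with hj hk
    · exact absurd ⟨by omega, by omega, by omega⟩ h
    all_goals simp

theorem eP_mul_eP_add_swap (j k : ℕ) : eP m j * eP m k + eP m k * eP m j = 0 := by
  simp [eP, ι_mul_ι_add_swap_splitQ]

theorem eM_mul_eM_add_swap (j k : ℕ) : eM m j * eM m k + eM m k * eM m j = 0 := by
  simp [eM, ι_mul_ι_add_swap_splitQ]

theorem eP_mul_eM_add_swap (j k : ℕ) :
    eP m j * eM m k + eM m k * eP m j = if j = k ∧ 1 ≤ j ∧ j ≤ m then 1 else 0 := by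
  rw [eP, eM, ι_mul_ι_add_swap_splitQ]
  simp only [Pi.zero_apply, mul_zero, Finset.sum_const_zero, add_zero,
    sum_indicator_mul_indicator]
  split_ifs <;> simp

theorem eP_mul_self (j : ℕ) : eP m j * eP m j = 0 := by
  rw [eP, CliffordAlgebra.ι_sq_scalar, splitQ_apply]
  simp

theorem eM_mul_self (j : ℕ) : eM m j * eM m j = 0 := by
  rw [eM, CliffordAlgebra.ι_sq_scalar, splitQ_apply]
  simp

theorem eP_mul_eM_add_swap_self {j : ℕ} (h1 : 1 ≤ j) (hj : j ≤ m) :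
    eP m j * eM m j + eM m j * eP m j = 1 := by
  rw [eP_mul_eM_add_swap, if_pos ⟨rfl, h1, hj⟩]

theorem eP_mul_eperp_of_ne {s t : ℕ} (hst : s ≠ t) :
    eP m s * eperp m t = -(eperp m t * eP m s) := by
  have hP := eq_neg_of_add_eq_zero_left (eP_mul_eP_add_swap (m := m) s t)
  have hM : eP m s * eM m t = -(eM m t * eP m s) :=
    eq_neg_of_add_eq_zero_left (by rw [eP_mul_eM_add_swap, if_neg fun h => hst h.1])
  rw [eperp, mul_sub, sub_mul, hP, hM, neg_sub_neg, neg_sub]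

theorem eM_mul_eperp_of_ne {s t : ℕ} (hst : s ≠ t) :
    eM m s * eperp m t = -(eperp m t * eM m s) := by
  have hM := eq_neg_of_add_eq_zero_left (eM_mul_eM_add_swap (m := m) s t)
  have hP : eM m s * eP m t = -(eP m t * eM m s) :=
    eq_neg_of_add_eq_zero_right (by rw [eP_mul_eM_add_swap, if_neg fun h => hst h.1.symm])
  rw [eperp, mul_sub, sub_mul, hP, hM, neg_sub_neg, neg_sub]

end Relations

theorem neg_inv_sign_mul_oddI (s : ℕ) (sg : Bool) :
    -((-1 : ℂ) ^ bval sg * oddI s)⁻¹ =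
      (-1) ^ bval (if s % 2 = 1 then sg else !sg) * oddI s := by
  unfold oddI
  split_ifs <;> cases sg <;> simp [bval]

section Idempotents

variable {m : ℕ}

theorem idemF_false (s : ℕ) (sg : Bool) :
    idemF m s false sg = eP m s * eM m s + ((-1) ^ bval sg * oddI s) • eP m s := by
  cases sg <;> simp [idemF, idemLp, idemLm, bval, sub_eq_add_neg]

theorem idemF_true (s : ℕ) (sg : Bool) :
    idemF m s true sg = eM m s * eP m s + (-((-1) ^ bval sg * oddI s)) • eM m s := by
  cases sg <;> simp [idemF, idemMp, idemMm, bval, sub_eq_add_neg]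

theorem idemF_mul_eperp_self {s : ℕ} (h1 : 1 ≤ s) (hs : s ≤ m) (nrm sg : Bool) :
    idemF m s nrm sg * eperp m s =
      ((-1) ^ (bval sg + 1) * oddI s) • idemF m s nrm (if s % 2 = 1 then sg else !sg) := by
  have hc : (-1 : ℂ) ^ bval sg * oddI s ≠ 0 := by unfold oddI; split_ifs <;> simp
  have hpq := eP_mul_eM_add_swap_self h1 hs
  have hp := eP_mul_self (m := m) s
  have hq := eM_mul_self (m := m) s
  have hsign : (-1 : ℂ) ^ (bval sg + 1) * oddI s = -((-1) ^ bval sg * oddI s) := by ring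
  cases nrm
  · rw [idemF_false, idemF_false, eperp, mul_add_smul_mul_sub hp hq hpq hc,
      neg_inv_sign_mul_oddI, hsign]
  · rw [idemF_true, idemF_true, eperp, mul_add_smul_mul_sub_swap hp hq hpq (neg_ne_zero.mpr hc),
      hsign, inv_neg, neg_neg, ← neg_neg ((_ : ℂ)⁻¹), neg_inv_sign_mul_oddI]

theorem idemF_mul_eperp_of_ne {s t : ℕ} (hst : s ≠ t) (nrm sg : Bool) :
    idemF m s nrm sg * eperp m t = eperp m t * idemF m s nrm (!sg) := by
  have hP := eP_mul_eperp_of_ne (m := m) hst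
  have hM := eM_mul_eperp_of_ne (m := m) hst
  cases nrm
  · rw [idemF_false, idemF_false,
      add_smul_mul_of_anticommute (commute_mul_of_anticommute hP hM) hP]
    cases sg <;> simp [bval, sub_eq_add_neg]
  · rw [idemF_true, idemF_true,
      add_smul_mul_of_anticommute (commute_mul_of_anticommute hM hP) hM]
    cases sg <;> simp [bval, sub_eq_add_neg]

end Idempotents

/-- `F_{2a-1} F_{2a} e_{2a-1}^⊥ e_{2a}^⊥
= (-1)^{|F_{2a-1}|+|F_{2a}|+1} i F_{2a-1} F_{2a}`. -/
theorem pair_right_mul_eperp (m : ℕ) (a : ℕ) (ha : 1 ≤ a) (ham : 2 * a ≤ m)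
    (nrm₁ sg₁ nrm₂ sg₂ : Bool) :
    idemF m (2 * a - 1) nrm₁ sg₁ * idemF m (2 * a) nrm₂ sg₂ *
        eperp m (2 * a - 1) * eperp m (2 * a) =
      ((-1 : ℂ) ^ (bval sg₁ + bval sg₂ + 1) * Complex.I) •
        (idemF m (2 * a - 1) nrm₁ sg₁ * idemF m (2 * a) nrm₂ sg₂) := by
  have hodd := idemF_mul_eperp_self (m := m) (s := 2 * a - 1) (by omega) (by omega) nrm₁ sg₁
  have heven := idemF_mul_eperp_self (m := m) (s := 2 * a) (by omega) ham nrm₂ (!sg₂)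
  rw [if_pos (by omega)] at hodd
  rw [if_neg (by omega), Bool.not_not] at heven
  have hI : oddI (2 * a - 1) = Complex.I := if_pos (by omega)
  have h1 : oddI (2 * a) = 1 := if_neg (by omega)
  calc idemF m (2 * a - 1) nrm₁ sg₁ * idemF m (2 * a) nrm₂ sg₂ *
          eperp m (2 * a - 1) * eperp m (2 * a)
      = (idemF m (2 * a - 1) nrm₁ sg₁ * eperp m (2 * a - 1)) *
          (idemF m (2 * a) nrm₂ (!sg₂) * eperp m (2 * a)) := by
        rw [mul_assoc _ (idemF m (2 * a) nrm₂ sg₂), idemF_mul_eperp_of_ne (by omega), mul_assoc,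
          mul_assoc, mul_assoc]
    _ = ((-1 : ℂ) ^ (bval sg₁ + bval sg₂ + 1) * Complex.I) •
          (idemF m (2 * a - 1) nrm₁ sg₁ * idemF m (2 * a) nrm₂ sg₂) := by
        rw [hodd, heven, smul_mul_smul_comm, hI, h1]
        congr 1
        cases sg₁ <;> cases sg₂ <;> norm_num [bval]

end
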